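/- Let Ω ⊂ ℝ^d be a nonempty bounded open set, Y a normed vector space, A : L²(Ω) → Y a continuous (possibly nonlinear) map, g ∈ Y, β > 0, and R : L²(Ω) → ℝ a continuous functional. Then for every integer n ≥ 1 and every r > 0 there exists f* ∈ X_{n,r} such that ‖A(f*) − g‖_Y + β·R(f*) ≤ ‖A(f) − g‖_Y + β·R(f) for all f ∈ X_{n,r}; that is, the penalized residual functional attains its minimum over the network class X_{n,r}. -/

import Mathlib

open MeasureTheory Filter Topology Bornology

noncomputable section

/-- Parameter of a single neuron: `(a, b, c)`. -/
abbrev NNParam (d : ℕ) : Type := ℝ × (Fin d → ℝ) × ℝ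

/-- ℓ¹ norm on `ℝ^d`. -/
def l1 {d : ℕ} (b : Fin d → ℝ) : ℝ := ∑ i, |b i|

/-- The two-layer ReLU network with parameters `θ`. -/
def netFun {d n : ℕ} (θ : Fin n → NNParam d) : (Fin d → ℝ) → ℝ :=
  fun x => (1 / (n : ℝ)) * ∑ j, (θ j).1 * max (∑ i, (θ j).2.1 i * x i + (θ j).2.2) 0

theorem netFun_continuous {d n : ℕ} (θ : Fin n → NNParam d) : Continuous (netFun θ) := by
  unfold netFun
  refine continuous_const.mul (continuous_finset_sum _ fun j _ => continuous_const.mul ?_)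
  exact ((continuous_finset_sum _ fun i _ =>
    (continuous_const.mul (continuous_apply i))).add continuous_const).max continuous_const

/-- Membership of a single-neuron parameter in the set `M_r`. -/
def memMr {d : ℕ} (r : ℝ) (p : NNParam d) : Prop :=
  |p.1| ≤ r ∧ l1 p.2.1 + |p.2.2| = 1

theorem memLp_net {d n : ℕ} {Ω : Set (Fin d → ℝ)} (hΩo : IsOpen Ω) (hΩb : IsBounded Ω)
    (θ : Fin n → NNParam d) : MemLp (netFun θ) 2 (volume.restrict Ω) := by
  have hc := netFun_continuous θ
  obtain ⟨C, hC⟩ := hΩb.isCompact_closure.exists_bound_of_continuousOn hc.continuousOn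
  haveI : Fact (volume Ω < ⊤) := ⟨hΩb.measure_lt_top⟩
  refine MemLp.of_bound (hc.aestronglyMeasurable.restrict) C ?_
  filter_upwards [ae_restrict_mem hΩo.measurableSet] with x hx
  exact hC x (subset_closure hx)

/-- The two-layer ReLU network with parameters `θ`, as an element of `L²(Ω)`. -/
def netLp {d n : ℕ} (Ω : Set (Fin d → ℝ)) (hΩo : IsOpen Ω) (hΩb : IsBounded Ω)
    (θ : Fin n → NNParam d) : Lp ℝ 2 (volume.restrict Ω) :=
  (memLp_net hΩo hΩb θ).toLp (netFun θ)

/-- The class `X_{n,r}` of width-`n` networks with parameters in `M_r`, inside `L²(Ω)`. -/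
def Xlp {d : ℕ} (Ω : Set (Fin d → ℝ)) (hΩo : IsOpen Ω) (hΩb : IsBounded Ω)
    (n : ℕ) (r : ℝ) : Set (Lp ℝ 2 (volume.restrict Ω)) :=
  {f | ∃ θ : Fin n → NNParam d, (∀ j, memMr r (θ j)) ∧ f = netLp Ω hΩo hΩb θ}

/-! The parameter set `M_r ⊆ ℝ × ℝ^d × ℝ` is closed and bounded, hence compact, and so is
`M_r^n`. The network `netFun θ x` is jointly continuous in `(θ, x)`; since `Ω` has compact
closure, Heine–Cantor makes `θ ↦ netFun θ` continuous for the uniform norm on `Ω`, and on the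
finite measure space `Ω` this dominates the `L²` norm. Hence `X_{n,r}` is a nonempty compact
subset of `L²(Ω)`, on which the continuous penalized residual attains its minimum. -/
section ContinuousToLp

variable {P α E : Type*} [TopologicalSpace P] [TopologicalSpace α] [MeasurableSpace α]
  [NormedAddCommGroup E] {p : ENNReal} [Fact (1 ≤ p)] {μ : Measure α} [IsFiniteMeasure μ]

theorem continuous_toLp_of_continuous_uncurry {F : P → α → E}
    (hF : Continuous (Function.uncurry F)) {k : Set α} (hk : IsCompact k)
    (hμk : ∀ᵐ x ∂μ, x ∈ k) (hF_mem : ∀ θ, MemLp (F θ) p μ) :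
    Continuous fun θ => (hF_mem θ).toLp (F θ) := by
  refine continuous_iff_continuousAt.2 fun q => Metric.continuousAt_iff'.2 fun ε hε => ?_
  set c : ℝ := (measureUnivNNReal μ : ℝ) ^ p.toReal⁻¹
  have hc : 0 ≤ c := by positivity
  have hδ : 0 < ε / (c + 1) := by positivity
  obtain ⟨v, hv, hvk⟩ := hk.mem_uniformity_of_prod (s := Set.univ) hF.continuousOn
    (Set.mem_univ q) (Metric.dist_mem_uniformity hδ)
  rw [nhdsWithin_univ] at hv
  filter_upwards [hv] with θ hθ
  have hbound : ∀ᵐ x ∂μ, ‖((hF_mem θ).sub (hF_mem q)).toLp (F θ - F q) x‖ ≤ ε / (c + 1) := by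
    filter_upwards [MemLp.coeFn_toLp ((hF_mem θ).sub (hF_mem q)), hμk] with x hx hxk
    rw [hx, Pi.sub_apply, ← dist_eq_norm]
    exact (hvk θ hθ x hxk).le
  calc dist ((hF_mem θ).toLp (F θ)) ((hF_mem q).toLp (F q))
      = ‖((hF_mem θ).sub (hF_mem q)).toLp (F θ - F q)‖ := by rw [dist_eq_norm, MemLp.toLp_sub]
    _ ≤ c * (ε / (c + 1)) := Lp.norm_le_of_ae_bound hδ.le hbound
    _ < ε := by
      rw [mul_div_assoc', div_lt_iff₀ (by positivity)]
      nlinarith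

end ContinuousToLp

theorem continuous_netFun_uncurry {d n : ℕ} :
    Continuous (Function.uncurry (netFun : (Fin n → NNParam d) → (Fin d → ℝ) → ℝ)) := by
  unfold netFun
  fun_prop

theorem continuous_netLp {d n : ℕ} {Ω : Set (Fin d → ℝ)} (hΩo : IsOpen Ω) (hΩb : IsBounded Ω) :
    Continuous (netLp Ω hΩo hΩb : (Fin n → NNParam d) → _) := by
  have : Fact (volume Ω < ⊤) := ⟨hΩb.measure_lt_top⟩
  refine continuous_toLp_of_continuous_uncurry continuous_netFun_uncurry
    hΩb.isCompact_closure ?_ (memLp_net hΩo hΩb)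
  filter_upwards [ae_restrict_mem hΩo.measurableSet] with x hx
  exact subset_closure hx

theorem abs_le_l1 {d : ℕ} (b : Fin d → ℝ) (i : Fin d) : |b i| ≤ l1 b :=
  Finset.single_le_sum (f := fun i => |b i|) (fun _ _ => abs_nonneg _) (Finset.mem_univ i)

theorem isCompact_setOf_memMr (d : ℕ) (r : ℝ) : IsCompact {p : NNParam d | memMr r p} := by
  have hbox : IsCompact
      (Set.Icc (-r) r ×ˢ Set.univ.pi (fun _ : Fin d => Set.Icc (-1 : ℝ) 1) ×ˢ Set.Icc (-1 : ℝ) 1) :=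
    isCompact_Icc.prod ((isCompact_univ_pi fun _ => isCompact_Icc).prod isCompact_Icc)
  refine hbox.of_isClosed_subset ?_ ?_
  · refine (isClosed_le continuous_fst.abs continuous_const).inter
      (isClosed_eq ?_ continuous_const)
    unfold l1
    fun_prop
  · rintro ⟨a, b, c⟩ ⟨ha, hbc⟩
    have hl1 : 0 ≤ l1 b := Finset.sum_nonneg fun i _ => abs_nonneg _
    refine ⟨abs_le.1 ha, fun i _ => abs_le.1 ?_, abs_le.1 ?_⟩
    · linarith [abs_le_l1 b i, abs_nonneg c]
    · linarith

theorem Xlp_eq_image {d : ℕ} (Ω : Set (Fin d → ℝ)) (hΩo : IsOpen Ω) (hΩb : IsBounded Ω)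
    (n : ℕ) (r : ℝ) :
    Xlp Ω hΩo hΩb n r =
      netLp Ω hΩo hΩb '' Set.univ.pi fun _ : Fin n => {p : NNParam d | memMr r p} := by
  ext f
  simp only [Xlp, Set.mem_image, Set.mem_univ_pi, Set.mem_ofPred_eq, eq_comm]

theorem isCompact_Xlp {d : ℕ} (Ω : Set (Fin d → ℝ)) (hΩo : IsOpen Ω) (hΩb : IsBounded Ω)
    (n : ℕ) (r : ℝ) : IsCompact (Xlp Ω hΩo hΩb n r) := by
  rw [Xlp_eq_image]
  exact (isCompact_univ_pi fun _ => isCompact_setOf_memMr d r).image (continuous_netLp hΩo hΩb)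

theorem Xlp_nonempty {d : ℕ} (Ω : Set (Fin d → ℝ)) (hΩo : IsOpen Ω) (hΩb : IsBounded Ω)
    (n : ℕ) {r : ℝ} (hr : 0 ≤ r) : (Xlp Ω hΩo hΩb n r).Nonempty :=
  ⟨_, fun _ => (0, 0, 1), fun _ => ⟨by simpa using hr, by simp [l1]⟩, rfl⟩

theorem penalized_residual_attains_min_on_network_class_general
    {d : ℕ} (Ω : Set (Fin d → ℝ)) (hΩo : IsOpen Ω)
    (hΩb : IsBounded Ω)
    {Y : Type*} [NormedAddCommGroup Y]
    (A : Lp ℝ 2 (volume.restrict Ω) → Y) (hA : Continuous A) (g : Y)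
    (β : ℝ)
    (R : Lp ℝ 2 (volume.restrict Ω) → ℝ) (hR : Continuous R)
    (n : ℕ) (r : ℝ) (hr : 0 < r) :
    ∃ fs ∈ Xlp Ω hΩo hΩb n r, ∀ f ∈ Xlp Ω hΩo hΩb n r,
      ‖A fs - g‖ + β * R fs ≤ ‖A f - g‖ + β * R f := by
  have hobj : Continuous fun f => ‖A f - g‖ + β * R f := by fun_prop
  obtain ⟨fs, hfs, hmin⟩ := (isCompact_Xlp Ω hΩo hΩb n r).exists_isMinOn
    (Xlp_nonempty Ω hΩo hΩb n hr.le) hobj.continuousOn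
  exact ⟨fs, hfs, fun f hf => hmin hf⟩

/-- For a continuous (possibly nonlinear) map `A : L²(Ω) → Y` into a
normed vector space, data `g ∈ Y`, a penalty weight `β > 0` and a continuous functional
`R : L²(Ω) → ℝ`, the penalized residual `f ↦ ‖A(f) − g‖ + β·R(f)` attains its minimum over
the network class `X_{n,r} ⊆ L²(Ω)`. -/
theorem penalized_residual_attains_min_on_network_class
    {d : ℕ} (hd : 1 ≤ d) (Ω : Set (Fin d → ℝ)) (hne : Ω.Nonempty) (hΩo : IsOpen Ω)
    (hΩb : IsBounded Ω)
    {Y : Type*} [NormedAddCommGroup Y] [NormedSpace ℝ Y]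
    (A : Lp ℝ 2 (volume.restrict Ω) → Y) (hA : Continuous A) (g : Y)
    (β : ℝ) (hβ : 0 < β)
    (R : Lp ℝ 2 (volume.restrict Ω) → ℝ) (hR : Continuous R)
    (n : ℕ) (hn : 1 ≤ n) (r : ℝ) (hr : 0 < r) :
    ∃ fs ∈ Xlp Ω hΩo hΩb n r, ∀ f ∈ Xlp Ω hΩo hΩb n r,
      ‖A fs - g‖ + β * R fs ≤ ‖A f - g‖ + β * R f :=
  penalized_residual_attains_min_on_network_class_general Ω hΩo hΩb A hA g β R hR n r hr

end
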